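/- arXiv:1412.0349 — 2 statements merged into one kernel-verified Lean document; each statement's English description precedes it below -/
import Mathlib

section
/- For fixed ρ > 0 and M > 0, the function h(z) = ρ/z − ln z + ln(1 + M/(e^{(z−1)/ρ} − 1)) + M e^{(z−1)/ρ}/((e^{(z−1)/ρ}−1)² + M(e^{(z−1)/ρ}−1)) is strictly decreasing on (1, ∞). -/
open Real Set

/-! With `u = exp ((z - 1) / ρ) - 1`, which increases from `0` as `z` increases from `1`, the
last two terms are `log (1 + M / u) + M (u + 1) / (u² + M u)`, a sum of two decreasing functions
of `u`; the first two terms `ρ / z - log z` are decreasing in `z` as well. -/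

lemma strictAntiOn_log_one_add_div {M : ℝ} (hM : 0 < M) :
    StrictAntiOn (fun u : ℝ => log (1 + M / u)) (Ioi 0) := fun a ha b hb hab =>
  log_lt_log (by have := hb.out; positivity)
    (add_lt_add_right (div_lt_div_of_pos_left hM ha hab) 1)

lemma strictAntiOn_mul_add_one_div {M : ℝ} (hM : 0 < M) :
    StrictAntiOn (fun u : ℝ => M * (u + 1) / (u ^ 2 + M * u)) (Ioi 0) := by
  intro a (ha : 0 < a) b (hb : 0 < b) hab
  rw [div_lt_div_iff₀ (by positivity) (by positivity)]
  -- `(a + 1) (b² + M b) - (b + 1) (a² + M a) = (b - a) (a b + a + b + M)`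
  have key : 0 < (b - a) * (a * b + a + b + M) := mul_pos (by linarith) (by positivity)
  nlinarith

lemma strictMono_exp_div_sub_one {ρ : ℝ} (hρ : 0 < ρ) :
    StrictMono (fun z : ℝ => exp ((z - 1) / ρ) - 1) := fun _ _ h =>
  sub_lt_sub_right (exp_lt_exp.2 (div_lt_div_of_pos_right (sub_lt_sub_right h 1) hρ)) 1

lemma exp_div_sub_one_pos {ρ z : ℝ} (hρ : 0 < ρ) (hz : 1 < z) : 0 < exp ((z - 1) / ρ) - 1 :=
  sub_pos.2 (one_lt_exp_iff.2 (div_pos (sub_pos.2 hz) hρ))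

/-- h(z) is strictly decreasing on (1, ∞). -/
theorem h_strictAnti (ρ M : ℝ) (hρ : 0 < ρ) (hM : 0 < M) :
    StrictAntiOn (fun z : ℝ =>
      ρ / z - Real.log z + Real.log (1 + M / (exp ((z - 1) / ρ) - 1)) +
        M * exp ((z - 1) / ρ) /
          ((exp ((z - 1) / ρ) - 1) ^ 2 + M * (exp ((z - 1) / ρ) - 1)))
      (Set.Ioi 1) := by
  intro a (ha : 1 < a) b (hb : 1 < b) hab
  have hu := strictMono_exp_div_sub_one hρ hab
  have hua := exp_div_sub_one_pos hρ ha
  have hub := exp_div_sub_one_pos hρ hb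
  have hlog := strictAntiOn_log_one_add_div hM hua hub hu
  have hfrac := strictAntiOn_mul_add_one_div hM hua hub hu
  simp only [sub_add_cancel] at hfrac
  have hρz : ρ / b < ρ / a := div_lt_div_of_pos_left hρ (by linarith) hab
  have hlogz : log a < log b := log_lt_log (by linarith) hab
  simp only
  linarith
end

section
/- For k₂ > 0 and ρ > 0, the function π(R_s) with ξ(R_s) defined as the positive root of ξ² + A(R_s)ξ − B(R_s) = 0 (A = k₂(2^{R_s}−1)/(1+k₂2^{R_s}), B = ρk₂(1−2^{−R_s})/(1+k₂2^{R_s})) satisfies: the left-hand side of k₂(2^{R_s} + (2^{R_s}−1)/ξ)(R_s ln 2 − 1 + R_s ln 2/ξ) = 1 is monotonically increasing in R_s, hence the equation has at most one root. -/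
open Real Set

/-!
Write `x = R_s ln 2` and `u = x / ξ`. Expanding, the left-hand side is
`k₂ (eˣ (x - 1) + u (2eˣ - 1 - v) + v u²)` with `v = (eˣ - 1) / x`: the first term is strictly
increasing, `v` and `2eˣ - 1 - v` are nonnegative and increasing, so it remains to see that `u`
increases. Now `ξ / x` is the positive root of `η² + a η = a r` with `a = A / x` and
`r = ρ / (x eˣ)`; both `a r = B / x²` and `r` decrease in `x`, and this forces the root to
decrease, whatever `a` does.
-/

lemma exp_sub_one_div_le_of_le {x y : ℝ} (hx : x ≠ 0) (hy : y ≠ 0) (hxy : x ≤ y) :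
    (exp x - 1) / x ≤ (exp y - 1) / y := by
  simpa using convexOn_exp.secant_mono (mem_univ 0) (mem_univ x) (mem_univ y) hx hy hxy

lemma exp_sub_one_div_le_exp {x : ℝ} (hx : 0 < x) : (exp x - 1) / x ≤ exp x := by
  rw [div_le_iff₀ hx]
  have h := add_one_le_exp (-x)
  have he : exp (-x) * exp x = 1 := by rw [← exp_add, neg_add_cancel, exp_zero]
  nlinarith [exp_pos x]

lemma strictMonoOn_exp_mul_sub_one : StrictMonoOn (fun x => exp x * (x - 1)) (Ici 0) := by
  refine strictMonoOn_of_deriv_pos (convex_Ici 0) (by fun_prop) fun x hx => ?_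
  rw [interior_Ici, mem_Ioi] at hx
  have hd : HasDerivAt (fun x => exp x * (x - 1)) (exp x * (x - 1) + exp x * 1) x :=
    (hasDerivAt_exp x).mul ((hasDerivAt_id x).sub_const 1)
  rw [hd.deriv]
  nlinarith [exp_pos x]

lemma monotoneOn_two_mul_exp_sub_one_sub_exp_sub_one_div :
    MonotoneOn (fun x => 2 * exp x - 1 - (exp x - 1) / x) (Ioi 0) := by
  have hd : ∀ x ∈ interior (Ioi (0 : ℝ)), HasDerivAt (fun x => 2 * exp x - 1 - (exp x - 1) / x)
      (2 * exp x - (exp x * x - (exp x - 1) * 1) / x ^ 2) x := fun x hx =>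
    (((hasDerivAt_exp x).const_mul 2).sub_const 1).sub
      (((hasDerivAt_exp x).sub_const 1).div (hasDerivAt_id x) (interior_subset hx).ne')
  refine monotoneOn_of_deriv_nonneg (convex_Ioi 0)
    (HasDerivAt.continuousOn fun x hx => hd x (by rwa [interior_Ioi]))
    (fun x hx => (hd x hx).differentiableAt.differentiableWithinAt) fun x hx => ?_
  rw [(hd x hx).deriv]
  rw [interior_Ioi, mem_Ioi] at hx
  rw [sub_nonneg, div_le_iff₀ (pow_pos hx 2)]
  -- `exp x * (2x² - x + 1) ≥ (1 + x)(2x² - x + 1) ≥ 1`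
  nlinarith [add_one_le_exp x, mul_pos hx hx, exp_pos x, sq_nonneg (x - 1)]

lemma le_of_sq_add_mul_eq_mul {a₁ a₂ r₁ r₂ η₁ η₂ : ℝ} (ha₂ : 0 ≤ a₂) (hη₁ : 0 ≤ η₁)
    (h₁ : η₁ ^ 2 + a₁ * η₁ = a₁ * r₁) (h₂ : η₂ ^ 2 + a₂ * η₂ = a₂ * r₂)
    (hb : a₂ * r₂ ≤ a₁ * r₁) (hr : r₂ ≤ r₁) : η₂ ≤ η₁ := by
  have key : η₂ ^ 2 + a₂ * η₂ ≤ η₁ ^ 2 + a₂ * η₁ := by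
    rcases le_or_gt a₁ a₂ with ha | ha
    · nlinarith [mul_le_mul_of_nonneg_right ha hη₁]
    · have hη₁r : η₁ ≤ r₁ := le_of_mul_le_mul_left (by nlinarith) (ha₂.trans_lt ha)
      nlinarith [mul_le_mul_of_nonneg_left hη₁r (sub_nonneg.mpr ha.le),
        mul_le_mul_of_nonneg_left hr ha₂]
  by_contra! h
  nlinarith [mul_le_mul_of_nonneg_left h.le ha₂]

lemma half_neg_add_sqrt_pos {a b : ℝ} (ha : 0 ≤ a) (hb : 0 < b) :
    0 < 1 / 2 * (-a + √(a ^ 2 + 4 * b)) := by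
  have h : a < √(a ^ 2 + 4 * b) := by
    rw [lt_sqrt ha]
    linarith
  linarith

lemma half_neg_add_sqrt_sq_add_mul {a b : ℝ} (h : 0 ≤ a ^ 2 + 4 * b) :
    (1 / 2 * (-a + √(a ^ 2 + 4 * b))) ^ 2 + a * (1 / 2 * (-a + √(a ^ 2 + 4 * b))) = b := by
  linear_combination sq_sqrt h / 4

namespace SecrecyRate

/- The quantities of the paper in the variable `x = R_s ln 2`, so that `2 ^ R_s = eˣ`. -/

noncomputable def A (k x : ℝ) : ℝ := k * (exp x - 1) / (1 + k * exp x)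

noncomputable def B (k ρ x : ℝ) : ℝ := ρ * k * (1 - exp (-x)) / (1 + k * exp x)

noncomputable def ξ (k ρ x : ℝ) : ℝ := 1 / 2 * (-A k x + √(A k x ^ 2 + 4 * B k ρ x))

noncomputable def lhs (k ρ x : ℝ) : ℝ :=
  k * (exp x + (exp x - 1) / ξ k ρ x) * (x - 1 + x / ξ k ρ x)

variable {k ρ x : ℝ}

lemma A_pos (hk : 0 < k) (hx : 0 < x) : 0 < A k x := by
  have := one_lt_exp_iff.mpr hx
  unfold A
  apply div_pos <;> nlinarith [exp_pos x]

lemma B_pos (hk : 0 < k) (hρ : 0 < ρ) (hx : 0 < x) : 0 < B k ρ x := by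
  have := exp_lt_one_iff.mpr (neg_neg_of_pos hx)
  unfold B
  apply div_pos <;> nlinarith [exp_pos x, mul_pos hρ hk]

lemma B_eq_mul_A_div_exp (k ρ x : ℝ) : B k ρ x = ρ * A k x / exp x := by
  rw [B, A, exp_neg]
  field_simp

lemma ξ_pos (hk : 0 < k) (hρ : 0 < ρ) (hx : 0 < x) : 0 < ξ k ρ x :=
  half_neg_add_sqrt_pos (A_pos hk hx).le (B_pos hk hρ hx)

lemma ξ_sq_add_mul (hk : 0 < k) (hρ : 0 < ρ) (hx : 0 < x) :
    ξ k ρ x ^ 2 + A k x * ξ k ρ x = B k ρ x :=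
  half_neg_add_sqrt_sq_add_mul (by nlinarith [A_pos hk hx, B_pos hk hρ hx])

lemma A_div_mul_eq_B_div_sq (hx : x ≠ 0) :
    A k x / x * (ρ / (exp x * x)) = B k ρ x / x ^ 2 := by
  rw [B_eq_mul_A_div_exp]
  field_simp

lemma antitoneOn_B_div_sq (hk : 0 < k) (hρ : 0 < ρ) :
    AntitoneOn (fun x => B k ρ x / x ^ 2) (Ioi 0) := by
  intro x (hx : 0 < x) y (hy : 0 < y) hxy
  have hB : ∀ z ≠ 0, B k ρ z / z ^ 2 = ρ * k * ((exp (-z) - 1) / -z) / z / (1 + k * exp z) :=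
    fun z hz => by rw [B]; field_simp; ring
  dsimp only
  rw [hB x hx.ne', hB y hy.ne']
  have hslope := exp_sub_one_div_le_of_le (neg_ne_zero.mpr hy.ne') (neg_ne_zero.mpr hx.ne')
    (neg_le_neg hxy)
  have hy₀ : 0 ≤ (exp (-y) - 1) / -y := div_nonneg_of_nonpos (by simp [hy.le]) (by linarith)
  have hx₀ : 0 ≤ (exp (-x) - 1) / -x := hy₀.trans hslope
  gcongr

lemma monotoneOn_div_ξ (hk : 0 < k) (hρ : 0 < ρ) :
    MonotoneOn (fun x => x / ξ k ρ x) (Ioi 0) := by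
  intro x (hx : 0 < x) y (hy : 0 < y) hxy
  have hη : ∀ z, 0 < z → (ξ k ρ z / z) ^ 2 + A k z / z * (ξ k ρ z / z)
      = A k z / z * (ρ / (exp z * z)) := fun z hz => by
    rw [A_div_mul_eq_B_div_sq hz.ne', ← ξ_sq_add_mul hk hρ hz]
    ring
  have hle : ξ k ρ y / y ≤ ξ k ρ x / x := by
    refine le_of_sq_add_mul_eq_mul (div_pos (A_pos hk hy) hy).le
      (div_pos (ξ_pos hk hρ hx) hx).le (hη x hx) (hη y hy) ?_ ?_
    · rw [A_div_mul_eq_B_div_sq hx.ne', A_div_mul_eq_B_div_sq hy.ne']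
      exact antitoneOn_B_div_sq hk hρ hx hy hxy
    · gcongr
  simpa only [inv_div] using inv_anti₀ (div_pos (ξ_pos hk hρ hy) hy) hle

lemma lhs_eq (hx : x ≠ 0) (hξ : ξ k ρ x ≠ 0) :
    lhs k ρ x = k * (exp x * (x - 1) + x / ξ k ρ x * (2 * exp x - 1 - (exp x - 1) / x)
      + (exp x - 1) / x * (x / ξ k ρ x) ^ 2) := by
  rw [lhs]
  field_simp
  ring

lemma lhs_strictMonoOn (hk : 0 < k) (hρ : 0 < ρ) : StrictMonoOn (lhs k ρ) (Ioi 0) := by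
  intro x (hx : 0 < x) y (hy : 0 < y) hxy
  rw [lhs_eq hx.ne' (ξ_pos hk hρ hx).ne', lhs_eq hy.ne' (ξ_pos hk hρ hy).ne']
  have hu := monotoneOn_div_ξ hk hρ hx hy hxy.le
  have hu₀ : 0 ≤ x / ξ k ρ x := (div_pos hx (ξ_pos hk hρ hx)).le
  have hv := exp_sub_one_div_le_of_le hx.ne' hy.ne' hxy.le
  have hv₀ : 0 ≤ (exp y - 1) / y := div_nonneg (by linarith [add_one_le_exp y]) hy.le
  have hw := monotoneOn_two_mul_exp_sub_one_sub_exp_sub_one_div hx hy hxy.le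
  have hw₀ : 0 ≤ 2 * exp x - 1 - (exp x - 1) / x := by
    linarith [exp_sub_one_div_le_exp hx, one_le_exp hx.le]
  refine mul_lt_mul_of_pos_left (add_lt_add_of_lt_of_le (add_lt_add_of_lt_of_le
    (strictMonoOn_exp_mul_sub_one hx.le hy.le hxy) ?_) ?_) hk
  · exact mul_le_mul hu hw hw₀ (hu₀.trans hu)
  · exact mul_le_mul hv (pow_le_pow_left₀ hu₀ hu 2) (sq_nonneg _) hv₀

end SecrecyRate

/-- The left-hand side of equation (25), with ξ the positive root of the quadratic,
    is strictly increasing in R_s on (0,∞); hence the equation has at most one root. -/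
theorem lhs_strictMono_unique_root (k₂ ρ : ℝ) (hk : 0 < k₂) (hρ : 0 < ρ) :
    let A := fun Rs : ℝ => k₂ * ((2:ℝ) ^ Rs - 1) / (1 + k₂ * 2 ^ Rs)
    let B := fun Rs : ℝ => ρ * k₂ * (1 - (2:ℝ) ^ (-Rs)) / (1 + k₂ * 2 ^ Rs)
    let ξ := fun Rs : ℝ => (1 / 2) * (-(A Rs) + Real.sqrt ((A Rs) ^ 2 + 4 * B Rs))
    let g := fun Rs : ℝ =>
      k₂ * ((2:ℝ) ^ Rs + ((2:ℝ) ^ Rs - 1) / ξ Rs) *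
        (Rs * Real.log 2 - 1 + Rs * Real.log 2 / ξ Rs)
    StrictMonoOn g (Set.Ioi 0) ∧
      ∀ R₁ ∈ Set.Ioi (0:ℝ), ∀ R₂ ∈ Set.Ioi (0:ℝ), g R₁ = 1 → g R₂ = 1 → R₁ = R₂ := by
  intro A B ξ g
  have hg : g = SecrecyRate.lhs k₂ ρ ∘ (· * log 2) := by
    ext R
    simp only [g, ξ, A, B, Function.comp, SecrecyRate.lhs, SecrecyRate.ξ, SecrecyRate.A,
      SecrecyRate.B, rpow_def_of_pos two_pos, mul_comm (log 2), neg_mul]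
  have hmono : StrictMonoOn g (Ioi 0) := by
    rw [hg]
    exact (SecrecyRate.lhs_strictMonoOn hk hρ).comp
      ((strictMono_mul_right_of_pos (log_pos one_lt_two)).strictMonoOn _)
      fun R (hR : 0 < R) => mul_pos hR (log_pos one_lt_two)
  exact ⟨hmono, fun R₁ h₁ R₂ h₂ e₁ e₂ => hmono.injOn h₁ h₂ (e₁.trans e₂.symm)⟩
end
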